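/- arXiv:1905.11033 — 2 statements merged into one kernel-verified Lean document; each statement's English description precedes it below -/
import Mathlib

section
/- Let (X_1, X_2) be a bivariate centered Gaussian vector with unit variances and correlation ρ ∈ (−1,1). Then E[X_1 · 1_{X_1 ≤ 0, X_1 + X_2 ≥ 0}] = (φ(0)/2)(√((1+ρ)/2) − 1) and E[X_2 · 1_{X_1 ≤ 0, X_1 + X_2 ≥ 0}] = (φ(0)/2)(√((1+ρ)/2) − ρ). -/
/-!
Write the event as the wedge `{x ≤ 0, a x + b y ≥ 0}` with `a = 1 + ρ`, `b = √(1 - ρ²)`, so that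
`a² + b² = 2 (1 + ρ)`, and use that `-φ` is a primitive of `t ↦ t φ(t)`. Integrating `y` first,
`E[Y₂; wedge] = ∫_{x ≤ 0} φ(x) φ(a x / b) dx`; integrating `x` first over `[-b y / a, 0]`,
`E[Y₁; wedge] = ∫_{y ≥ 0} φ(y) (φ(b y / a) - φ(0)) dy`. Both are Gaussian integrals on a
half-line: `∫_0^∞ φ(t) φ(c t) dt = φ(0) / (2 √(1 + c²))`.
-/

open MeasureTheory ProbabilityTheory Real Set Filter Topology

local notation "φ" => gaussianPDFReal 0 1

lemma gaussianPDFReal_zero_one_apply (x : ℝ) :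
    φ x = (√(2 * π))⁻¹ * exp (-(1 / 2) * x ^ 2) := by
  simp only [gaussianPDFReal, NNReal.coe_one, mul_one, sub_zero]; ring_nf

lemma gaussianPDFReal_zero_one_zero : φ 0 = (√(2 * π))⁻¹ := by
  simp [gaussianPDFReal]

lemma gaussianPDFReal_zero_one_neg (x : ℝ) : φ (-x) = φ x := by
  simp [gaussianPDFReal]

lemma hasDerivAt_neg_gaussianPDFReal_zero_one (x : ℝ) :
    HasDerivAt (fun y ↦ -φ y) (φ x * x) x := by
  have h : HasDerivAt (fun y ↦ -((√(2 * π))⁻¹ * exp (-(1 / 2) * y ^ 2))) (φ x * x) x := by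
    refine (((hasDerivAt_pow 2 x).const_mul _).exp.const_mul _).neg.congr_deriv ?_
    rw [gaussianPDFReal_zero_one_apply]; push_cast; ring
  simpa only [← gaussianPDFReal_zero_one_apply] using h

lemma tendsto_gaussianPDFReal_zero_one_atTop : Tendsto φ atTop (𝓝 0) := by
  rw [funext gaussianPDFReal_zero_one_apply, ← mul_zero (√(2 * π))⁻¹]
  exact (tendsto_exp_atBot.comp
    ((tendsto_pow_atTop two_ne_zero).const_mul_atTop_of_neg (by norm_num))).const_mul _

lemma integrable_gaussianPDFReal_zero_one_mul_id : Integrable fun x ↦ φ x * x := by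
  simp_rw [gaussianPDFReal_zero_one_apply, mul_assoc, mul_comm (exp _)]
  exact (integrable_mul_exp_neg_mul_sq (by norm_num)).const_mul _

lemma gaussianPDFReal_zero_one_mul_comp_mul (c x : ℝ) :
    φ x * φ (c * x) = (2 * π)⁻¹ * exp (-((1 + c ^ 2) / 2) * x ^ 2) := by
  rw [gaussianPDFReal_zero_one_apply, gaussianPDFReal_zero_one_apply, mul_mul_mul_comm,
    ← mul_inv, mul_self_sqrt (by positivity), ← exp_add]
  ring_nf

lemma integrable_gaussianPDFReal_zero_one_mul_comp_mul (c : ℝ) :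
    Integrable fun x ↦ φ x * φ (c * x) := by
  simp_rw [gaussianPDFReal_zero_one_mul_comp_mul]
  exact (integrable_exp_neg_mul_sq (by positivity)).const_mul _

lemma setIntegral_gaussianReal_eq_setIntegral_smul {E : Type*} [NormedAddCommGroup E]
    [NormedSpace ℝ E] {μ : ℝ} {v : NNReal} (hv : v ≠ 0) {s : Set ℝ} (hs : MeasurableSet s)
    (f : ℝ → E) :
    ∫ x in s, f x ∂gaussianReal μ v = ∫ x in s, gaussianPDFReal μ v x • f x := by
  rw [← integral_indicator hs, integral_gaussianReal_eq_integral_smul hv,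
    ← integral_indicator hs]
  simp_rw [indicator_smul]

lemma integrable_id_gaussianReal_zero_one : Integrable (fun x ↦ x) (gaussianReal 0 1) :=
  (memLp_id_gaussianReal 1).integrable le_rfl

lemma setIntegral_Ici_id_gaussianReal (t : ℝ) : ∫ y in Ici t, y ∂gaussianReal 0 1 = φ t := by
  rw [setIntegral_gaussianReal_eq_setIntegral_smul one_ne_zero measurableSet_Ici]
  simp_rw [smul_eq_mul]
  rw [integral_Ici_eq_integral_Ioi,
    integral_Ioi_of_hasDerivAt_of_tendsto' (fun y _ ↦ hasDerivAt_neg_gaussianPDFReal_zero_one y)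
      integrable_gaussianPDFReal_zero_one_mul_id.integrableOn
      tendsto_gaussianPDFReal_zero_one_atTop.neg]
  simp

lemma setIntegral_Icc_id_gaussianReal {u v : ℝ} (huv : u ≤ v) :
    ∫ x in Icc u v, x ∂gaussianReal 0 1 = φ u - φ v := by
  rw [setIntegral_gaussianReal_eq_setIntegral_smul one_ne_zero measurableSet_Icc]
  simp_rw [smul_eq_mul]
  rw [integral_Icc_eq_integral_Ioc, ← intervalIntegral.integral_of_le huv,
    intervalIntegral.integral_eq_sub_of_hasDerivAt
      (fun y _ ↦ hasDerivAt_neg_gaussianPDFReal_zero_one y)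
      integrable_gaussianPDFReal_zero_one_mul_id.intervalIntegrable]
  ring

lemma integral_Ioi_gaussianPDFReal_zero_one_mul_comp_mul (c : ℝ) :
    ∫ x in Ioi 0, φ x * φ (c * x) = φ 0 / (2 * √(1 + c ^ 2)) := by
  simp_rw [gaussianPDFReal_zero_one_mul_comp_mul]
  rw [integral_const_mul, integral_gaussian_Ioi, gaussianPDFReal_zero_one_zero,
    div_div_eq_mul_div, mul_comm π, sqrt_div' _ (by positivity)]
  have : 0 < √(2 * π) := sqrt_pos.2 (by positivity)
  have : 0 < √(1 + c ^ 2) := sqrt_pos.2 (by positivity)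
  field_simp
  rw [sq_sqrt (by positivity)]

lemma integral_Iic_gaussianPDFReal_zero_one_mul_comp_mul (c : ℝ) :
    ∫ x in Iic 0, φ x * φ (c * x) = φ 0 / (2 * √(1 + c ^ 2)) := by
  have h := integral_comp_neg_Iic 0 fun x ↦ φ x * φ (c * x)
  simp only [neg_zero, mul_neg, gaussianPDFReal_zero_one_neg] at h
  rw [h, integral_Ioi_gaussianPDFReal_zero_one_mul_comp_mul]

section PreimageSlices

variable {α β E : Type*} [MeasurableSpace α] [MeasurableSpace β] [NormedAddCommGroup E]
  [NormedSpace ℝ E] {μ : Measure α} {ν : Measure β} [SFinite μ] [SFinite ν]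
  {s : Set (α × β)} {f : α × β → E}

lemma setIntegral_prod_eq_integral_setIntegral_preimage (hs : MeasurableSet s)
    (hf : IntegrableOn f s (μ.prod ν)) :
    ∫ p in s, f p ∂μ.prod ν = ∫ x, ∫ y in Prod.mk x ⁻¹' s, f (x, y) ∂ν ∂μ := by
  rw [← integral_indicator hs, integral_prod _ (hf.integrable_indicator hs)]
  congr 1 with x
  rw [← integral_indicator (measurable_prodMk_left hs)]
  rfl

lemma setIntegral_prod_eq_integral_setIntegral_preimage_symm (hs : MeasurableSet s)
    (hf : IntegrableOn f s (μ.prod ν)) :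
    ∫ p in s, f p ∂μ.prod ν = ∫ y, ∫ x in (fun x ↦ (x, y)) ⁻¹' s, f (x, y) ∂μ ∂ν := by
  rw [← integral_indicator hs, integral_prod_symm _ (hf.integrable_indicator hs)]
  congr 1 with y
  rw [← integral_indicator (measurable_prodMk_right hs)]
  rfl

end PreimageSlices

lemma sqrt_one_add_div_sq (a : ℝ) {b : ℝ} (hb : 0 < b) :
    √(1 + (a / b) ^ 2) = √(a ^ 2 + b ^ 2) / b := by
  rw [show 1 + (a / b) ^ 2 = (a ^ 2 + b ^ 2) / b ^ 2 by field_simp; ring,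
    sqrt_div' _ (sq_nonneg b), sqrt_sq hb.le]

lemma div_sqrt_two_mul_self {x : ℝ} (hx : 0 ≤ x) : x / √(2 * x) = √(x / 2) := by
  rcases hx.eq_or_lt with rfl | hx
  · simp
  rw [div_eq_iff (by positivity), ← sqrt_mul (by positivity),
    show x / 2 * (2 * x) = x ^ 2 by ring, sqrt_sq hx.le]

def wedge (a b : ℝ) : Set (ℝ × ℝ) := {p | p.1 ≤ 0 ∧ 0 ≤ a * p.1 + b * p.2}

lemma measurableSet_wedge (a b : ℝ) : MeasurableSet (wedge a b) :=
  (measurableSet_le measurable_fst measurable_const).inter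
    (measurableSet_le measurable_const
      ((measurable_fst.const_mul a).add (measurable_snd.const_mul b)))

lemma setIntegral_wedge_snd (a : ℝ) {b : ℝ} (hb : 0 < b) :
    ∫ p in wedge a b, p.2 ∂(gaussianReal 0 1).prod (gaussianReal 0 1) =
      φ 0 * b / (2 * √(a ^ 2 + b ^ 2)) := by
  have hslice (x : ℝ) : ∫ y in Prod.mk x ⁻¹' wedge a b, y ∂gaussianReal 0 1 =
      (Iic 0).indicator (fun x ↦ φ (-(a / b) * x)) x := by
    by_cases hx : x ≤ 0
    · have : Prod.mk x ⁻¹' wedge a b = Ici (-(a / b) * x) := by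
        ext y
        have hlin : a * x + b * y = b * (y - -(a / b) * x) := by field_simp; ring
        simp only [wedge, mem_preimage, mem_ofPred_eq, mem_Ici, hx, true_and, hlin,
          mul_nonneg_iff_of_pos_left hb, sub_nonneg]
      rw [this, setIntegral_Ici_id_gaussianReal, indicator_of_mem (mem_Iic.2 hx)]
    · have : Prod.mk x ⁻¹' wedge a b = ∅ := by
        ext y
        simp [wedge, hx]
      rw [this, indicator_of_notMem (fun h ↦ hx (mem_Iic.1 h)), Measure.restrict_empty,
        integral_zero_measure]
  rw [setIntegral_prod_eq_integral_setIntegral_preimage (measurableSet_wedge a b)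
      (integrable_id_gaussianReal_zero_one.comp_snd _).integrableOn]
  simp_rw [hslice]
  rw [integral_indicator measurableSet_Iic,
    setIntegral_gaussianReal_eq_setIntegral_smul one_ne_zero measurableSet_Iic]
  simp_rw [smul_eq_mul]
  rw [integral_Iic_gaussianPDFReal_zero_one_mul_comp_mul, neg_sq, sqrt_one_add_div_sq a hb]
  field_simp

lemma setIntegral_wedge_fst {a b : ℝ} (ha : 0 < a) (hb : 0 < b) :
    ∫ p in wedge a b, p.1 ∂(gaussianReal 0 1).prod (gaussianReal 0 1) =
      φ 0 / 2 * (a / √(a ^ 2 + b ^ 2) - 1) := by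
  have hslice (y : ℝ) : ∫ x in (fun x ↦ (x, y)) ⁻¹' wedge a b, x ∂gaussianReal 0 1 =
      (Ici 0).indicator (fun y ↦ φ (-(b / a) * y) - φ (0 * y)) y := by
    have : (fun x ↦ (x, y)) ⁻¹' wedge a b = Icc (-(b / a) * y) 0 := by
      ext x
      have hlin : a * x + b * y = a * (x - -(b / a) * y) := by field_simp; ring
      simp only [wedge, mem_preimage, mem_ofPred_eq, mem_Icc, hlin,
        mul_nonneg_iff_of_pos_left ha, sub_nonneg, and_comm]
    rw [this]
    by_cases hy : 0 ≤ y
    · rw [setIntegral_Icc_id_gaussianReal (by nlinarith [div_pos hb ha]),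
        indicator_of_mem (mem_Ici.2 hy), zero_mul]
    · rw [Icc_eq_empty (by nlinarith [div_pos hb ha]),
        indicator_of_notMem (fun h ↦ hy (mem_Ici.1 h)), Measure.restrict_empty,
        integral_zero_measure]
  rw [setIntegral_prod_eq_integral_setIntegral_preimage_symm (measurableSet_wedge a b)
      (integrable_id_gaussianReal_zero_one.comp_fst _).integrableOn]
  simp_rw [hslice]
  rw [integral_indicator measurableSet_Ici,
    setIntegral_gaussianReal_eq_setIntegral_smul one_ne_zero measurableSet_Ici]
  simp_rw [smul_eq_mul, mul_sub]
  rw [integral_sub (integrable_gaussianPDFReal_zero_one_mul_comp_mul _).integrableOn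
      (integrable_gaussianPDFReal_zero_one_mul_comp_mul _).integrableOn,
    integral_Ici_eq_integral_Ioi, integral_Ici_eq_integral_Ioi,
    integral_Ioi_gaussianPDFReal_zero_one_mul_comp_mul,
    integral_Ioi_gaussianPDFReal_zero_one_mul_comp_mul, neg_sq, sqrt_one_add_div_sq b ha,
    add_comm (b ^ 2), zero_pow two_ne_zero, add_zero, sqrt_one]
  have : 0 < √(a ^ 2 + b ^ 2) := sqrt_pos.2 (by positivity)
  field_simp

/-- For a bivariate centered Gaussian `(X₁,X₂)` with unit variances and correlation
`ρ ∈ (−1,1)` — realized as `X₁ = Y₁`, `X₂ = ρY₁ + √(1−ρ²)Y₂` with `Y₁, Y₂` i.i.d.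
standard normal — one has
`E[X₁ · 1_{X₁ ≤ 0, X₁+X₂ ≥ 0}] = (φ(0)/2)(√((1+ρ)/2) − 1)` and
`E[X₂ · 1_{X₁ ≤ 0, X₁+X₂ ≥ 0}] = (φ(0)/2)(√((1+ρ)/2) − ρ)`. -/
theorem stmt10 (ρ : ℝ) (hρ₁ : -1 < ρ) (hρ₂ : ρ < 1) :
    (∫ p in {p : ℝ × ℝ | p.1 ≤ 0 ∧
        0 ≤ p.1 + (ρ * p.1 + Real.sqrt (1 - ρ ^ 2) * p.2)}, p.1
        ∂((gaussianReal 0 1).prod (gaussianReal 0 1)) =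
      (1 / Real.sqrt (2 * Real.pi)) / 2 * (Real.sqrt ((1 + ρ) / 2) - 1)) ∧
    (∫ p in {p : ℝ × ℝ | p.1 ≤ 0 ∧
        0 ≤ p.1 + (ρ * p.1 + Real.sqrt (1 - ρ ^ 2) * p.2)},
        (ρ * p.1 + Real.sqrt (1 - ρ ^ 2) * p.2)
        ∂((gaussianReal 0 1).prod (gaussianReal 0 1)) =
      (1 / Real.sqrt (2 * Real.pi)) / 2 * (Real.sqrt ((1 + ρ) / 2) - ρ)) := by
  set σ := √(1 - ρ ^ 2)
  have hσ : 0 < σ := sqrt_pos.2 (by nlinarith)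
  have hσ_sq : σ ^ 2 = 1 - ρ ^ 2 := sq_sqrt (by nlinarith)
  have hset : {p : ℝ × ℝ | p.1 ≤ 0 ∧ 0 ≤ p.1 + (ρ * p.1 + σ * p.2)} = wedge (1 + ρ) σ := by
    simp only [wedge, ← add_assoc, one_add_mul]
  have hnorm : (1 + ρ) / √((1 + ρ) ^ 2 + σ ^ 2) = √((1 + ρ) / 2) := by
    rw [hσ_sq, show (1 + ρ) ^ 2 + (1 - ρ ^ 2) = 2 * (1 + ρ) by ring,
      div_sqrt_two_mul_self (by linarith)]
  have hsnd : ∫ p in wedge (1 + ρ) σ, σ * p.2 ∂(gaussianReal 0 1).prod (gaussianReal 0 1) =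
      φ 0 / 2 * ((1 - ρ) * ((1 + ρ) / √((1 + ρ) ^ 2 + σ ^ 2))) := by
    rw [integral_const_mul, setIntegral_wedge_snd _ hσ]
    calc σ * (φ 0 * σ / (2 * √((1 + ρ) ^ 2 + σ ^ 2)))
        = φ 0 / 2 * (σ ^ 2 / √((1 + ρ) ^ 2 + σ ^ 2)) := by ring
      _ = _ := by rw [hσ_sq]; ring
  have hfst := setIntegral_wedge_fst (by linarith : 0 < 1 + ρ) hσ
  rw [hnorm, gaussianPDFReal_zero_one_zero, ← one_div] at hfst hsnd
  rw [hset]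
  refine ⟨hfst, ?_⟩
  rw [integral_add ((integrable_id_gaussianReal_zero_one.comp_fst _).const_mul ρ).integrableOn
      ((integrable_id_gaussianReal_zero_one.comp_snd _).const_mul σ).integrableOn,
    integral_const_mul, hfst, hsnd]
  ring
end

section
/- Let X = (X_1,...,X_p) be a centered Gaussian vector with positive definite covariance Σ, and suppose f̃ : ℝ^{p−1} → ℝ is a bounded measurable function. Define α := Σ^{-1} E[f̃(X_2−X_1, ..., X_p−X_{p−1}) · X]. Then the sum of the components of α is zero: Σ_{i=1}^p α_i = 0. -/
/-!
With `u := 𝟙ᵀΣ⁻¹` and `w := Aᵀu` we have `Aw = 𝟙`, so `∑ αᵢ = E[F(Y) ⟪w, Y⟫]` where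
`F y := f̃(differences of Ay)` is invariant under translation along `w`. The reflection in `w⊥`
preserves the standard Gaussian, fixes `F` and negates `⟪w, ·⟫`, so this expectation is zero.
-/

open MeasureTheory ProbabilityTheory Matrix
open scoped RealInnerProductSpace

theorem integral_mul_inner_stdGaussian_eq_zero {E : Type*} [NormedAddCommGroup E]
    [InnerProductSpace ℝ E] [FiniteDimensional ℝ E] [MeasurableSpace E] [BorelSpace E]
    {F : E → ℝ} (w : E) (hF : ∀ (y : E) (t : ℝ), F (y + t • w) = F y) :
    ∫ y, F y * ⟪w, y⟫ ∂stdGaussian E = 0 := by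
  set R := (ℝ ∙ w)ᗮ.reflection
  have hR : MeasurePreserving R (stdGaussian E) (stdGaussian E) :=
    ⟨R.continuous.measurable, stdGaussian_map R⟩
  have hFR (y : E) : F (R y) = F y := by
    have : R y = y + (-2 * (⟪w, y⟫ / ‖w‖ ^ 2)) • w := by
      rw [Submodule.reflection_orthogonal_apply, Submodule.reflection_singleton_apply]
      simp only [RCLike.ofReal_real_eq_id, id]
      module
    rw [this, hF]
  have hinner (y : E) : ⟪w, R y⟫ = -⟪w, y⟫ := calc
    ⟪w, R y⟫ = -⟪R w, R y⟫ := by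
      rw [Submodule.reflection_orthogonalComplement_singleton_eq_neg, inner_neg_left, neg_neg]
    _ = -⟪w, y⟫ := by rw [R.inner_map_map]
  have hsymm := hR.integral_comp R.toHomeomorph.measurableEmbedding (fun y => F y * ⟪w, y⟫)
  simp only [hFR, hinner, mul_neg, integral_neg] at hsymm
  linarith

theorem integral_mul_dotProduct_pi_gaussianReal_eq_zero {ι : Type*} [Fintype ι]
    {F : (ι → ℝ) → ℝ} (w : ι → ℝ) (hF : ∀ (y : ι → ℝ) (t : ℝ), F (y + t • w) = F y) :
    ∫ y, F y * (w ⬝ᵥ y) ∂Measure.pi (fun _ : ι => gaussianReal 0 1) = 0 := by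
  have h : MeasurePreserving (MeasurableEquiv.toLp 2 (ι → ℝ))
      (Measure.pi fun _ : ι => gaussianReal 0 1) (stdGaussian (EuclideanSpace ℝ ι)) :=
    ⟨(MeasurableEquiv.toLp 2 (ι → ℝ)).measurable, map_pi_eq_stdGaussian⟩
  calc ∫ y, F y * (w ⬝ᵥ y) ∂Measure.pi (fun _ : ι => gaussianReal 0 1)
      = ∫ x, F x.ofLp * ⟪WithLp.toLp 2 w, x⟫ ∂stdGaussian (EuclideanSpace ℝ ι) := by
        rw [← h.integral_comp']
        simp [EuclideanSpace.inner_toLp_toLp, dotProduct_comm]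
    _ = 0 := integral_mul_inner_stdGaussian_eq_zero _ fun x t => hF x.ofLp t

theorem integrable_dotProduct_pi_gaussianReal {ι : Type*} [Fintype ι] (a : ι → ℝ) :
    Integrable (fun y => a ⬝ᵥ y) (Measure.pi fun _ : ι => gaussianReal 0 1) :=
  integrable_finsetSum _ fun i _ => (integrable_eval IsGaussian.integrable_id).const_mul (a i)

theorem dotProduct_integral {α ι : Type*} [Fintype ι] [MeasurableSpace α] {μ : Measure α}
    (u : ι → ℝ) {f : ι → α → ℝ} (hf : ∀ i, Integrable (f i) μ) :
    u ⬝ᵥ (fun i => ∫ x, f i x ∂μ) = ∫ x, u ⬝ᵥ (fun i => f i x) ∂μ := by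
  simp only [dotProduct, ← integral_const_mul]
  rw [integral_finsetSum _ fun i _ => (hf i).const_mul (u i)]

/-- Let `X = A·Y` with `Y` standard Gaussian on `ℝ^{p+1}` and `AAᵀ = Σ` positive
definite, so `X ~ N(0,Σ)`. For bounded measurable `f̃ : ℝ^p → ℝ` and
`α := Σ⁻¹ E[f̃(X₂−X₁,…,X_{p+1}−X_p) · X]`, the components of `α` sum to zero. -/
theorem stmt18 (p : ℕ) (Cov A : Matrix (Fin (p+1)) (Fin (p+1)) ℝ)
    (hCov : Cov.PosDef) (hA : A * A.transpose = Cov)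
    (ftil : (Fin p → ℝ) → ℝ) (hmeas : Measurable ftil)
    (hbdd : ∃ C : ℝ, ∀ z, |ftil z| ≤ C) :
    ∑ i, (Cov⁻¹.mulVec (fun i =>
        ∫ y, ftil (fun k : Fin p => A.mulVec y k.succ - A.mulVec y k.castSucc) *
          A.mulVec y i ∂(Measure.pi fun _ : Fin (p+1) => gaussianReal 0 1))) i = 0 := by
  obtain ⟨C, hC⟩ := hbdd
  set F : (Fin (p+1) → ℝ) → ℝ :=
    fun y => ftil (fun k : Fin p => A.mulVec y k.succ - A.mulVec y k.castSucc)
  set u := 1 ᵥ* Cov⁻¹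
  set w := u ᵥ* A
  have hAw : A *ᵥ w = 1 := by
    rw [← vecMul_transpose, vecMul_vecMul, hA, vecMul_vecMul,
      nonsing_inv_mul _ hCov.det_pos.ne'.isUnit, vecMul_one]
  have hF (y : Fin (p+1) → ℝ) (t : ℝ) : F (y + t • w) = F y := by
    simp only [F, mulVec_add, mulVec_smul, hAw]
    congr 1 with k
    simp only [Pi.add_apply, Pi.smul_apply, Pi.one_apply]
    ring
  have hF_mul_integrable (i : Fin (p+1)) :
      Integrable (fun y => F y * (A *ᵥ y) i) (Measure.pi fun _ => gaussianReal 0 1) :=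
    (integrable_dotProduct_pi_gaussianReal (A i)).bdd_mul
      (hmeas.comp (by fun_prop)).aestronglyMeasurable (ae_of_all _ fun y => hC _)
  calc ∑ i, (Cov⁻¹ *ᵥ fun i => ∫ y, F y * (A *ᵥ y) i ∂_) i
      = u ⬝ᵥ fun i => ∫ y, F y * (A *ᵥ y) i ∂_ := by
        rw [← one_dotProduct, dotProduct_mulVec]
    _ = ∫ y, F y * (w ⬝ᵥ y) ∂_ := by
        rw [dotProduct_integral u hF_mul_integrable]
        congr 1 with y
        change u ⬝ᵥ (F y • A *ᵥ y) = _
        rw [dotProduct_smul, smul_eq_mul, dotProduct_mulVec]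
    _ = 0 := integral_mul_dotProduct_pi_gaussianReal_eq_zero w hF
end
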